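/- arXiv:2402.18580 — 4 statements merged into one kernel-verified Lean document; each statement's English description precedes it below -/
import Mathlib

section
/- Let Λ be a k-algebra, V a left Λ-module, and suppose there is a short exact sequence 0 → V →ι P →π V → 0 of Λ-modules with P projective. Then P acquires the structure of a module over k[ε] ⊗_k Λ (ε^2 = 0), where ε acts by ι∘π, and this module is free as a k[ε]-module with P/εP ≅ V. -/
/-!
Let `f = ι ∘ π`. Since `π ∘ ι = 0` we have `f ∘ f = 0`, so `ε ↦ f` makes `P` a `Λ[ε]`-module, and
exactness gives `ker f = ker π = range ι = range f`. Over a field `k`, a `k[ε]`-module `M` with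
`ker ε = ε M` is free: for a `k`-complement `C` of `ε M` one has `M = C ⊕ ε C` with `ε : C → ε C`
bijective, so a `k`-basis of `C` is a `k[ε]`-basis of `M`.
-/

open DualNumber TrivSqZeroExt

namespace Module.End

variable {R M : Type*} [Ring R] [AddCommGroup M] [Module R M]

/-- `R` need not be commutative, so `ε ↦ f` is lifted as a map of `ℤ`-algebras; the commutation
of `f` with `R` required by `DualNumber.lift` is the `R`-linearity of `f`. -/
abbrev dualNumberModule (f : Module.End R M) (hf : f * f = 0) : Module R[ε] M :=
  Module.compHom M (DualNumber.lift
    ⟨((Module.toModuleEnd ℤ M).toIntAlgHom, f.restrictScalars ℤ),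
      by ext x; exact LinearMap.congr_fun hf x,
      fun a => by ext x; exact f.map_smul a x⟩ : R[ε] →ₐ[ℤ] Module.End ℤ M).toRingHom

variable (f : Module.End R M) (hf : f * f = 0)

theorem dualNumberModule_smul (a : R[ε]) (x : M) :
    letI := dualNumberModule f hf
    a • x = a.fst • x + a.snd • f x := rfl

theorem dualNumberModule_inl_smul (r : R) (x : M) :
    letI := dualNumberModule f hf
    (inl r : R[ε]) • x = r • x := by
  simp [dualNumberModule_smul]

theorem dualNumberModule_eps_smul (x : M) :
    letI := dualNumberModule f hf
    (ε : R[ε]) • x = f x := by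
  simp [dualNumberModule_smul]

end Module.End

namespace DualNumber

section

variable {k M : Type*} [Field k] [AddCommGroup M] [Module k M] [Module k[ε] M]
  [IsScalarTower k k[ε] M]

theorem smul_eq_fst_smul_add_snd_smul_eps_smul (a : k[ε]) (x : M) :
    a • x = a.fst • x + a.snd • (ε : k[ε]) • x := by
  conv_lhs => rw [← inl_fst_add_inr_snd_eq a, ← algebraMap_eq_inl, inr_eq_smul_eps]
  rw [add_smul, algebraMap_smul, smul_assoc]

variable (C : Submodule k M)
  (hC : IsCompl (LinearMap.range (DistribSMul.toLinearMap k M (ε : k[ε]))) C)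
include hC

theorem exists_eq_add_eps_smul_of_isCompl (x : M) :
    ∃ c₁ ∈ C, ∃ c₂ ∈ C, c₁ + (ε : k[ε]) • c₂ = x := by
  have hsup : ∀ x : M, ∃ y, ∃ c ∈ C, (ε : k[ε]) • y + c = x := fun x => by
    obtain ⟨_, ⟨y, rfl⟩, c, hc, hx⟩ := Submodule.mem_sup.1 (hC.sup_eq_top ▸ Submodule.mem_top (x := x))
    exact ⟨y, c, hc, hx⟩
  obtain ⟨y, c₁, hc₁, rfl⟩ := hsup x
  obtain ⟨z, c₂, hc₂, rfl⟩ := hsup y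
  refine ⟨c₁, hc₁, c₂, hc₂, ?_⟩
  rw [smul_add, smul_smul, eps_mul_eps, zero_smul, zero_add, add_comm]

theorem eq_zero_of_add_eps_smul_eq_zero_of_isCompl
    (h : ∀ x : M, (ε : k[ε]) • x = 0 → ∃ y, (ε : k[ε]) • y = x)
    {c₁ c₂ : M} (hc₁ : c₁ ∈ C) (hc₂ : c₂ ∈ C) (hc : c₁ + (ε : k[ε]) • c₂ = 0) :
    c₁ = 0 ∧ c₂ = 0 := by
  have hdisj : ∀ y : M, (ε : k[ε]) • y ∈ C → (ε : k[ε]) • y = 0 := fun y hy =>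
    (Submodule.disjoint_def.1 hC.disjoint) _ ⟨y, rfl⟩ hy
  have h₁ : c₁ = 0 := by
    rw [eq_neg_of_add_eq_zero_left hc, ← smul_neg] at hc₁ ⊢
    exact hdisj _ hc₁
  rw [h₁, zero_add] at hc
  obtain ⟨y, rfl⟩ := h c₂ hc
  exact ⟨h₁, hdisj y hc₂⟩

theorem linearIndependent_of_isCompl
    (h : ∀ x : M, (ε : k[ε]) • x = 0 → ∃ y, (ε : k[ε]) • y = x)
    {ι : Type*} {v : ι → M} (hv : LinearIndependent k v) (hvC : ∀ i, v i ∈ C) :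
    LinearIndependent k[ε] v := by
  rw [linearIndependent_iff'] at hv ⊢
  intro s g hg i hi
  have hmem : ∀ c : ι → k, ∑ j ∈ s, c j • v j ∈ C := fun c =>
    Submodule.sum_mem _ fun j _ => C.smul_mem _ (hvC j)
  have hsplit : ∑ j ∈ s, (g j).fst • v j + (ε : k[ε]) • ∑ j ∈ s, (g j).snd • v j = 0 := by
    simp only [Finset.smul_sum, smul_comm (ε : k[ε]) (_ : k), ← Finset.sum_add_distrib,
      ← smul_eq_fst_smul_add_snd_smul_eps_smul, hg]
  obtain ⟨hfst, hsnd⟩ :=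
    eq_zero_of_add_eps_smul_eq_zero_of_isCompl C hC h (hmem _) (hmem _) hsplit
  exact TrivSqZeroExt.ext (hv s _ hfst i hi) (hv s _ hsnd i hi)

theorem span_eq_top_of_isCompl {ι : Type*} {v : ι → M}
    (hv : Submodule.span k (Set.range v) = C) :
    Submodule.span k[ε] (Set.range v) = ⊤ := by
  have hCle : ∀ c ∈ C, c ∈ Submodule.span k[ε] (Set.range v) := fun c hc =>
    Submodule.span_le_restrictScalars k k[ε] _ (hv ▸ hc)
  refine Submodule.eq_top_iff'.2 fun x => ?_
  obtain ⟨c₁, hc₁, c₂, hc₂, rfl⟩ := exists_eq_add_eps_smul_of_isCompl C hC x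
  exact add_mem (hCle c₁ hc₁) (Submodule.smul_mem _ _ (hCle c₂ hc₂))

end

theorem free_of_ker_eps_le_range {k M : Type*} [Field k] [AddCommGroup M] [Module k[ε] M]
    (h : ∀ x : M, (ε : k[ε]) • x = 0 → ∃ y, (ε : k[ε]) • y = x) :
    Module.Free k[ε] M := by
  let : Module k M := Module.compHom M (algebraMap k k[ε])
  have : IsScalarTower k k[ε] M := .of_compHom k k[ε] M
  obtain ⟨C, hC⟩ :=
    Submodule.exists_isCompl (LinearMap.range (DistribSMul.toLinearMap k M (ε : k[ε])))
  let b := Module.Basis.ofVectorSpace k C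
  have hv : LinearIndependent k (C.subtype ∘ b) := b.linearIndependent.map' _ C.ker_subtype
  have hspan : Submodule.span k (Set.range (C.subtype ∘ b)) = C := by
    rw [Set.range_comp, Submodule.span_image, b.span_eq, Submodule.map_top, Submodule.range_subtype]
  exact .of_basis (.mk (linearIndependent_of_isCompl C hC h hv fun i => (b i).2)
    (span_eq_top_of_isCompl C hC hspan).ge)

end DualNumber

theorem stmt_2_general (k : Type) [Field k] (Λ : Type) [Ring Λ] [Algebra k Λ]
    (V P : Type) [AddCommGroup V] [Module Λ V]
    [AddCommGroup P] [Module Λ P]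
    (ι : V →ₗ[Λ] P) (π : P →ₗ[Λ] V)
    (hι : Function.Injective ι) (hπ : Function.Surjective π)
    (hexact : LinearMap.range ι = LinearMap.ker π) :
    (∃ inst : Module (DualNumber Λ) P,
      letI := inst
      (∀ (a : Λ) (x : P), (TrivSqZeroExt.inl a : DualNumber Λ) • x = a • x) ∧
      (∀ x : P, (DualNumber.eps : DualNumber Λ) • x = ι (π x))) ∧
    (∃ inst : Module (DualNumber k) P,
      letI := inst
      (∀ (c : k) (x : P), (TrivSqZeroExt.inl c : DualNumber k) • x = algebraMap k Λ c • x) ∧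
      (∀ x : P, (DualNumber.eps : DualNumber k) • x = ι (π x)) ∧
      Module.Free (DualNumber k) P) ∧
    Nonempty ((P ⧸ LinearMap.range (ι.comp π)) ≃ₗ[Λ] V) := by
  have hrange : LinearMap.range (ι ∘ₗ π) = LinearMap.ker π := by
    rw [LinearMap.range_comp_of_range_eq_top _ (LinearMap.range_eq_top.2 hπ), hexact]
  have hker : LinearMap.ker (ι ∘ₗ π) = LinearMap.ker π :=
    LinearMap.ker_comp_of_ker_eq_bot _ (LinearMap.ker_eq_bot.2 hι)
  have hf : (ι ∘ₗ π) * (ι ∘ₗ π) = 0 := LinearMap.range_le_ker_iff.1 (hrange.trans hker.symm).le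
  let : Module k P := Module.compHom P (algebraMap k Λ)
  have : IsScalarTower k Λ P := .of_compHom k Λ P
  have hfk : (ι ∘ₗ π).restrictScalars k * (ι ∘ₗ π).restrictScalars k = 0 := by
    ext x; exact LinearMap.congr_fun hf x
  refine ⟨⟨_, Module.End.dualNumberModule_inl_smul _ hf, Module.End.dualNumberModule_eps_smul _ hf⟩,
    ⟨_, Module.End.dualNumberModule_inl_smul _ hfk, Module.End.dualNumberModule_eps_smul _ hfk, ?_⟩,
    ⟨(Submodule.quotEquivOfEq _ _ hrange).trans (π.quotKerEquivOfSurjective hπ)⟩⟩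
  let := Module.End.dualNumberModule _ hfk
  refine DualNumber.free_of_ker_eps_le_range fun x hx => ?_
  simp only [Module.End.dualNumberModule_eps_smul] at hx ⊢
  exact (hrange.trans hker.symm).ge hx

/-- Let `Λ` be a finite dimensional `k`-algebra, `V` a finitely generated
`Λ`-module, and `0 → V →ι P →π V → 0` a short exact sequence with `P` projective.  Then
`P` acquires the structure of a module over `k[ε] ⊗_k Λ` (encoded via the isomorphic ring
`Λ[ε] = DualNumber Λ`) in which `Λ` acts by the original action and `ε` acts by `ι ∘ π`;
this module is free as a `k[ε]`-module (for the corresponding `k[ε]`-structure), and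
`P/εP = P/range(ι∘π) ≅ V`. -/
theorem stmt_2 (k : Type) [Field k] (Λ : Type) [Ring Λ] [Algebra k Λ]
    [FiniteDimensional k Λ]
    (V P : Type) [AddCommGroup V] [Module Λ V] [Module.Finite Λ V]
    [AddCommGroup P] [Module Λ P] [Module.Projective Λ P]
    (ι : V →ₗ[Λ] P) (π : P →ₗ[Λ] V)
    (hι : Function.Injective ι) (hπ : Function.Surjective π)
    (hexact : LinearMap.range ι = LinearMap.ker π) :
    (∃ inst : Module (DualNumber Λ) P,
      letI := inst
      (∀ (a : Λ) (x : P), (TrivSqZeroExt.inl a : DualNumber Λ) • x = a • x) ∧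
      (∀ x : P, (DualNumber.eps : DualNumber Λ) • x = ι (π x))) ∧
    (∃ inst : Module (DualNumber k) P,
      letI := inst
      (∀ (c : k) (x : P), (TrivSqZeroExt.inl c : DualNumber k) • x = algebraMap k Λ c • x) ∧
      (∀ x : P, (DualNumber.eps : DualNumber k) • x = ι (π x)) ∧
      Module.Free (DualNumber k) P) ∧
    Nonempty ((P ⧸ LinearMap.range (ι.comp π)) ≃ₗ[Λ] V) :=
  stmt_2_general k Λ V P ι π hι hπ hexact
end

section
/- Let Λ = kQ[ε] with kQ a finite dimensional hereditary algebra and k[ε] the dual numbers. A finitely generated left Λ-module V is torsionless (i.e., embeds into a projective Λ-module) if and only if Ext^1_Λ(V, Λ) = 0. -/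
/-- `Ext¹_Λ(V, W) = 0`, expressed by the standard characterization: every short exact
sequence `0 → W → E → V → 0` of `Λ`-modules splits. -/
def Ext1Vanishes (Λ : Type) [Ring Λ] (V : Type) [AddCommGroup V] [Module Λ V]
    (W : Type) [AddCommGroup W] [Module Λ W] : Prop :=
  ∀ (E : Type) (_ : AddCommGroup E) (_ : Module Λ E)
    (f : W →ₗ[Λ] E) (g : E →ₗ[Λ] V),
    Function.Injective f → Function.Surjective g →
    LinearMap.range f = LinearMap.ker g →
    ∃ s : V →ₗ[Λ] E, g.comp s = LinearMap.id

/-!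
Write `Λ = A[ε]`. As a left `A`-module `Λ ≅ A ⊕ Aε` is free, and it is also coinduced:
`Hom_Λ(M, Λ) ≃ Hom_A(M, A)` via `φ ↦ snd ∘ φ`, with inverse `ψ ↦ (x ↦ ψ(εx) + ψ(x)ε)`.

If `V ⊆ Λⁿ`, then `V` is a submodule of a free `A`-module, hence `A`-projective since `A` is
hereditary. For an `A`-projective `V` every extension `0 → Λ → E → V → 0` splits over `A`; the
adjunction turns an `A`-linear retraction `E → Λ` into a `Λ`-linear one.

Conversely, if `Ext¹_Λ(V, Λ) = 0`, choose `0 → K → Λᵐ → V → 0`. Every `Λ`-map `K → Λ` extends to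
`Λᵐ`, so by the adjunction every `A`-map `K → A` extends to `Λᵐ`. Over the noetherian hereditary
`A`, `K` is finitely generated projective, hence a summand of some `Aˡ`; extending the coordinates
of `K → Aˡ` gives a retraction of `K → Λᵐ`, so `V` is `A`-projective. Finally an `A`-embedding
`s : V → Aⁿ` induces the `Λ`-embedding `V → Λⁿ` adjoint to the coordinates of `s`.
-/

open TrivSqZeroExt DualNumber

noncomputable section

section Splitting

variable {R : Type} [Ring R] {K F V W : Type} [AddCommGroup K] [Module R K]
  [AddCommGroup F] [Module R F] [AddCommGroup V] [Module R V] [AddCommGroup W] [Module R W]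

/-- The pushout of `K → F` along `φ : K → W` is an extension of `V` by `W`; a splitting of it
yields the extension of `φ`. -/
theorem Ext1Vanishes.exists_extend (h : Ext1Vanishes R V W) {i : K →ₗ[R] F} {q : F →ₗ[R] V}
    (hi : Function.Injective i) (hq : Function.Surjective q) (hiq : Function.Exact i q)
    (φ : K →ₗ[R] W) : ∃ ψ : F →ₗ[R] W, ψ ∘ₗ i = φ := by
  set U := LinearMap.range (φ.prod (-i))
  have hmk : ∀ x, (Submodule.Quotient.mk (0, i x) : (W × F) ⧸ U) =
      Submodule.Quotient.mk (φ x, 0) := fun x =>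
    (Submodule.Quotient.eq U).mpr (LinearMap.mem_range.mpr ⟨-x, by simp⟩)
  let f₀ : W →ₗ[R] (W × F) ⧸ U := U.mkQ ∘ₗ LinearMap.inl R W F
  let g₀ : (W × F) ⧸ U →ₗ[R] V := U.liftQ (q ∘ₗ LinearMap.snd R W F) (by
    rintro _ ⟨x, rfl⟩
    simp [hiq.apply_apply_eq_zero])
  have hf₀ : Function.Injective f₀ := by
    refine (injective_iff_map_eq_zero f₀).mpr fun w hw => ?_
    obtain ⟨x, hx⟩ := (Submodule.Quotient.mk_eq_zero U).mp hw
    obtain rfl : x = 0 := hi (by simpa using congrArg Prod.snd hx)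
    simpa using (congrArg Prod.fst hx).symm
  have hg₀ : Function.Surjective g₀ := fun v =>
    let ⟨x, hx⟩ := hq v
    ⟨U.mkQ (0, x), by simpa [g₀] using hx⟩
  have hexact : Function.Exact f₀ g₀ := by
    intro y
    induction y using Submodule.Quotient.induction_on with | _ p
    obtain ⟨w, x⟩ := p
    refine ⟨fun hx => ?_, ?_⟩
    · obtain ⟨x, rfl⟩ := (hiq x).mp (by simpa [g₀] using hx)
      exact ⟨w + φ x, (Submodule.Quotient.eq U).mpr (LinearMap.mem_range.mpr ⟨x, by simp⟩)⟩
    · rintro ⟨w', hw'⟩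
      rw [← hw']
      simp [f₀, g₀]
  obtain ⟨s, hs⟩ := h _ _ _ f₀ g₀ hf₀ hg₀ (LinearMap.exact_iff.mp hexact).symm
  obtain ⟨ρ, hρ⟩ :=
    (hexact.splitInjectiveEquiv hg₀).symm (hexact.splitSurjectiveEquiv hf₀ ⟨s, hs⟩)
  refine ⟨ρ ∘ₗ U.mkQ ∘ₗ LinearMap.inr R W F, LinearMap.ext fun x => ?_⟩
  simpa [f₀, hmk] using LinearMap.congr_fun hρ (φ x)

theorem Module.Projective.of_exists_extend [Module.Finite R K] [Module.Projective R K]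
    [Module.Projective R F] {i : K →ₗ[R] F} {q : F →ₗ[R] V} (hi : Function.Injective i)
    (hq : Function.Surjective q) (hiq : Function.Exact i q)
    (hext : ∀ φ : K →ₗ[R] R, ∃ ψ : F →ₗ[R] R, ψ ∘ₗ i = φ) : Module.Projective R V := by
  obtain ⟨n, t, s, -, -, hts⟩ := Module.Finite.exists_comp_eq_id_of_projective R K
  choose G hG using fun j => hext (LinearMap.proj j ∘ₗ s)
  have hGi : LinearMap.pi G ∘ₗ i = s := by
    ext x j
    exact LinearMap.congr_fun (hG j) x
  have hretract : (t ∘ₗ LinearMap.pi G) ∘ₗ i = LinearMap.id := by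
    rw [LinearMap.comp_assoc, hGi, hts]
  obtain ⟨l, hl⟩ := (hiq.splitSurjectiveEquiv hi).symm (hiq.splitInjectiveEquiv hq ⟨_, hretract⟩)
  exact .of_split l q hl

end Splitting

def IsLeftHereditary (A : Type) [Ring A] : Prop :=
  ∀ (P : Type) (_ : AddCommGroup P) (_ : Module A P),
    Module.Projective A P → ∀ N : Submodule A P, Module.Projective A N

theorem IsLeftHereditary.projective_of_injective {A M P : Type} [Ring A] (hA : IsLeftHereditary A)
    [AddCommGroup M] [Module A M] [AddCommGroup P] [Module A P] [Module.Projective A P]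
    (f : M →ₗ[A] P) (hf : Function.Injective f) : Module.Projective A M :=
  haveI := hA P _ _ ‹_› (LinearMap.range f)
  .of_equiv' (LinearEquiv.ofInjective f hf).symm

namespace DualExt

variable {A Λ : Type} [Ring A] [Ring Λ] (e : Λ ≃+* DualNumber A)

def incl : A →+* Λ := e.symm.toRingHom.comp (inlHom A A)

def eps : Λ := e.symm ε

@[simp] theorem apply_incl (a : A) : e (incl e a) = inl a := by simp [incl]

@[simp] theorem apply_eps : e (eps e) = ε := by simp [eps]

theorem eps_mul_comm (r : Λ) : eps e * r = r * eps e :=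
  e.injective (by simpa using (commute_eps_left (e r)).eq)

theorem eps_mul_eps : eps e * eps e = 0 :=
  e.injective (by simp)

theorem incl_fst_add_eps_mul_incl_snd (r : Λ) :
    incl e (e r).fst + eps e * incl e (e r).snd = r :=
  e.injective (by ext <;> simp)

def IsScalarRestriction (M : Type) [AddCommGroup M] [Module Λ M] [Module A M] : Prop :=
  ∀ (a : A) (x : M), a • x = incl e a • x

variable {e} {M N : Type} [AddCommGroup M] [Module Λ M] [AddCommGroup N] [Module Λ N]

theorem eps_smul_eps_smul (x : M) : eps e • eps e • x = 0 := by
  rw [← mul_smul, eps_mul_eps, zero_smul]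

variable [Module A M] [Module A N]

theorem IsScalarRestriction.compatibleSMul (hM : IsScalarRestriction e M)
    (hN : IsScalarRestriction e N) : LinearMap.CompatibleSMul M N A Λ :=
  ⟨fun f a x => by rw [hM, hN, map_smul]⟩

theorem IsScalarRestriction.eps_smul_comm (hM : IsScalarRestriction e M) (a : A) (x : M) :
    eps e • a • x = a • eps e • x := by
  rw [hM, hM, ← mul_smul, ← mul_smul, eps_mul_comm]

theorem IsScalarRestriction.smul_eq (hM : IsScalarRestriction e M) (r : Λ) (x : M) :
    r • x = (e r).fst • x + (e r).snd • eps e • x := by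
  conv_lhs => rw [← incl_fst_add_eps_mul_incl_snd e r]
  rw [add_smul, mul_smul, hM, hM, ← mul_smul (eps e), ← mul_smul (incl e _), eps_mul_comm]

def frobeniusEquiv (hM : IsScalarRestriction e M) : (M →ₗ[A] A) ≃ (M →ₗ[Λ] Λ) where
  toFun ψ :=
    { toFun x := e.symm (inl (ψ (eps e • x)) + inr (ψ x))
      map_add' x y := by simp only [smul_add, map_add, inl_add, inr_add]; abel
      map_smul' r x := by
        apply e.injective
        rw [RingHom.id_apply, smul_eq_mul, map_mul, RingEquiv.apply_symm_apply,
          RingEquiv.apply_symm_apply, hM.smul_eq r x]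
        ext <;> simp [hM.eps_smul_comm, eps_smul_eps_smul] }
  invFun φ :=
    { toFun x := (e (φ x)).snd
      map_add' x y := by simp
      map_smul' a x := by simp [hM a x] }
  left_inv ψ := by ext; simp
  right_inv φ := by
    ext x
    apply e.injective
    ext <;> simp

@[simp] theorem frobeniusEquiv_symm_apply (hM : IsScalarRestriction e M) (φ : M →ₗ[Λ] Λ) (x : M) :
    (frobeniusEquiv hM).symm φ x = (e (φ x)).snd := rfl

@[simp] theorem snd_frobeniusEquiv_apply (hM : IsScalarRestriction e M) (ψ : M →ₗ[A] A) (x : M) :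
    (e (frobeniusEquiv hM ψ x)).snd = ψ x := by
  simp [frobeniusEquiv]

theorem ext1Vanishes_of_projective (hM : IsScalarRestriction e M) [Module.Projective A M] :
    Ext1Vanishes Λ M Λ := by
  intro E _ _ f g hf hg hfg
  let _ : Module A E := Module.compHom E (incl e)
  let _ : Module A Λ := Module.compHom Λ (incl e)
  have hE : IsScalarRestriction e E := fun _ _ => rfl
  have hΛ : IsScalarRestriction e Λ := fun _ _ => rfl
  have := hΛ.compatibleSMul hE
  have := hE.compatibleSMul hM
  have hexact : Function.Exact f g := LinearMap.exact_iff.mpr hfg.symm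
  have hexactA : Function.Exact (f.restrictScalars A) (g.restrictScalars A) := hexact
  obtain ⟨ρ, hρ⟩ := (hexactA.splitInjectiveEquiv hg).symm
    (hexactA.splitSurjectiveEquiv hf
      ⟨_, (Module.projective_lifting_property (g.restrictScalars A) .id hg).choose_spec⟩)
  let φ := frobeniusEquiv hE ((frobeniusEquiv hΛ).symm .id ∘ₗ ρ)
  have hφ : φ ∘ₗ f = .id := (frobeniusEquiv hΛ).symm.injective <| LinearMap.ext fun r => by
    simpa [φ] using congrArg (fun x => (e x).snd) (LinearMap.congr_fun hρ r)
  exact ⟨_, ((hexact.splitSurjectiveEquiv hf).symm (hexact.splitInjectiveEquiv hg ⟨φ, hφ⟩)).2⟩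

theorem exists_extend_of_ext1Vanishes {K F V : Type} [AddCommGroup K] [Module Λ K] [Module A K]
    [AddCommGroup F] [Module Λ F] [Module A F] [AddCommGroup V] [Module Λ V]
    (h : Ext1Vanishes Λ V Λ) (hK : IsScalarRestriction e K) (hF : IsScalarRestriction e F)
    {i : K →ₗ[Λ] F} {q : F →ₗ[Λ] V} (hi : Function.Injective i) (hq : Function.Surjective q)
    (hiq : Function.Exact i q) (φ : K →ₗ[A] A) : ∃ ψ : F →ₗ[A] A, ∀ x, ψ (i x) = φ x := by
  obtain ⟨Ψ, hΨ⟩ := h.exists_extend hi hq hiq (frobeniusEquiv hK φ)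
  exact ⟨(frobeniusEquiv hF).symm Ψ, fun x => by simp [← LinearMap.comp_apply Ψ i, hΨ]⟩

section FreeModules

variable [Module A Λ]

def linearEquivProd (hΛ : IsScalarRestriction e Λ) : Λ ≃ₗ[A] A × A where
  toFun r := ((e r).fst, (e r).snd)
  invFun p := e.symm (inl p.1 + inr p.2)
  map_add' r s := by simp
  map_smul' a r := by simp [hΛ a r]
  left_inv r := e.injective (by ext <;> simp)
  right_inv p := by simp

theorem isScalarRestriction_pi (hΛ : IsScalarRestriction e Λ) (n : ℕ) :
    IsScalarRestriction e (Fin n → Λ) :=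
  fun a x => funext fun i => hΛ a (x i)

theorem projective_pi (hΛ : IsScalarRestriction e Λ) (n : ℕ) :
    Module.Projective A (Fin n → Λ) :=
  .of_equiv' (LinearEquiv.piCongrRight fun _ => linearEquivProd hΛ).symm

theorem finite_pi (hΛ : IsScalarRestriction e Λ) (n : ℕ) : Module.Finite A (Fin n → Λ) :=
  .equiv (LinearEquiv.piCongrRight fun _ => linearEquivProd hΛ).symm

end FreeModules

theorem projective_of_injective_pi (hA : IsLeftHereditary A) (hM : IsScalarRestriction e M)
    {n : ℕ} (w : M →ₗ[Λ] Fin n → Λ) (hw : Function.Injective w) : Module.Projective A M := by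
  let _ : Module A Λ := Module.compHom Λ (incl e)
  have hΛ : IsScalarRestriction e Λ := fun _ _ => rfl
  have := projective_pi hΛ n
  have := hM.compatibleSMul (isScalarRestriction_pi hΛ n)
  exact hA.projective_of_injective (w.restrictScalars A) hw

theorem exists_injective_pi (hM : IsScalarRestriction e M) [Module.Finite A M]
    [Module.Projective A M] : ∃ (n : ℕ) (w : M →ₗ[Λ] Fin n → Λ), Function.Injective w := by
  obtain ⟨n, -, s, -, hs, -⟩ := Module.Finite.exists_comp_eq_id_of_projective A M
  refine ⟨n, LinearMap.pi fun j => frobeniusEquiv hM (LinearMap.proj j ∘ₗ s),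
    fun x y hxy => hs (funext fun j => ?_)⟩
  simpa using congrArg (fun z => (e (z j)).snd) hxy

theorem IsScalarRestriction.finite (hM : IsScalarRestriction e M) [Module.Finite Λ M] :
    Module.Finite A M := by
  obtain ⟨m, q, hq⟩ := Module.Finite.exists_fin' Λ M
  let _ : Module A Λ := Module.compHom Λ (incl e)
  have hΛ : IsScalarRestriction e Λ := fun _ _ => rfl
  have := finite_pi hΛ m
  have := (isScalarRestriction_pi hΛ m).compatibleSMul hM
  exact .of_surjective (q.restrictScalars A) hq

theorem projective_of_ext1Vanishes (hA : IsLeftHereditary A) [IsNoetherianRing A]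
    [Module.Finite Λ M] (hM : IsScalarRestriction e M) (h : Ext1Vanishes Λ M Λ) :
    Module.Projective A M := by
  obtain ⟨m, q, hq⟩ := Module.Finite.exists_fin' Λ M
  let _ : Module A Λ := Module.compHom Λ (incl e)
  have hΛ : IsScalarRestriction e Λ := fun _ _ => rfl
  have hF := isScalarRestriction_pi hΛ m
  have := projective_pi hΛ m
  have := finite_pi hΛ m
  let K := LinearMap.ker q
  let _ : Module A K := Module.compHom K (incl e)
  have hK : IsScalarRestriction e K := fun _ _ => rfl
  have := hK.compatibleSMul hF
  have := hF.compatibleSMul hM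
  have hi : Function.Injective (K.subtype.restrictScalars A) := Subtype.val_injective
  have := Module.Finite.of_injective _ hi
  have := hA.projective_of_injective _ hi
  have hiq := LinearMap.exact_subtype_ker_map q
  exact .of_exists_extend (q := q.restrictScalars A) hi hq hiq fun φ =>
    (exists_extend_of_ext1Vanishes h hK hF Subtype.val_injective hq hiq φ).imp
      fun _ hψ => LinearMap.ext hψ

theorem exists_injective_pi_iff_ext1Vanishes (hA : IsLeftHereditary A) [IsNoetherianRing A]
    [Module.Finite Λ M] (hM : IsScalarRestriction e M) :
    (∃ (n : ℕ) (w : M →ₗ[Λ] Fin n → Λ), Function.Injective w) ↔ Ext1Vanishes Λ M Λ := by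
  constructor
  · rintro ⟨n, w, hw⟩
    have := projective_of_injective_pi hA hM w hw
    exact ext1Vanishes_of_projective hM
  · intro h
    have := hM.finite
    have := projective_of_ext1Vanishes hA hM h
    exact exists_injective_pi hM

end DualExt

def tensorDualNumberEquiv (k A : Type) [Field k] [Ring A] [Algebra k A] :
    TensorProduct k A (DualNumber k) ≃ₐ[k] DualNumber A :=
  AlgEquiv.ofAlgHom
    (Algebra.TensorProduct.lift (inlAlgHom k A A)
      (DualNumber.lift ⟨(Algebra.ofId k (DualNumber A), ε), eps_mul_eps,
        fun _ => commute_eps_left _⟩)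
      (fun _ _ => by
        simp only [lift_apply_apply, Algebra.ofId_apply]
        exact (Algebra.commute_algebraMap_right _ _).add_right
          ((Algebra.commute_algebraMap_right _ _).mul_right (commute_eps_right _))))
    (DualNumber.lift ⟨(Algebra.TensorProduct.includeLeft, 1 ⊗ₜ ε), by simp,
      fun _ => by simp [Commute, SemiconjBy]⟩)
    (by ext <;> simp)
    (by ext <;> simp)

end

/-- Let `A` be a finite dimensional hereditary `k`-algebra (such as the path
algebra `kQ` of a finite connected acyclic quiver) and `Λ = A ⊗_k k[ε]` with `k[ε]` the
dual numbers.  A finitely generated left `Λ`-module `V` is torsionless (embeds into a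
finitely generated projective `Λ`-module) if and only if `Ext¹_Λ(V, Λ) = 0`. -/
theorem stmt_11 (k : Type) [Field k] (A : Type) [Ring A] [Algebra k A]
    [FiniteDimensional k A]
    (hHer : ∀ (P : Type) (_ : AddCommGroup P) (_ : Module A P),
      Module.Projective A P → ∀ N : Submodule A P, Module.Projective A N)
    (V : Type) [AddCommGroup V] [Module (TensorProduct k A (DualNumber k)) V]
    [Module.Finite (TensorProduct k A (DualNumber k)) V] :
    (∃ (P : Type) (_ : AddCommGroup P) (_ : Module (TensorProduct k A (DualNumber k)) P),
        Module.Finite (TensorProduct k A (DualNumber k)) P ∧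
        Module.Projective (TensorProduct k A (DualNumber k)) P ∧
        ∃ ι : LinearMap (R := TensorProduct k A (DualNumber k))
          (S := TensorProduct k A (DualNumber k))
          (RingHom.id (TensorProduct k A (DualNumber k))) V P, Function.Injective ι) ↔
    Ext1Vanishes (TensorProduct k A (DualNumber k)) V
      (TensorProduct k A (DualNumber k)) := by
  let e : TensorProduct k A (DualNumber k) ≃+* DualNumber A :=
    (tensorDualNumberEquiv k A).toRingEquiv
  let _ : Module A V := Module.compHom V (DualExt.incl (Λ := TensorProduct k A (DualNumber k)) e)
  have hV : DualExt.IsScalarRestriction (Λ := TensorProduct k A (DualNumber k)) e V :=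
    fun _ _ => rfl
  have : IsNoetherianRing A := isNoetherian_of_tower k inferInstance
  rw [← DualExt.exists_injective_pi_iff_ext1Vanishes hHer hV]
  constructor
  · rintro ⟨P, _, _, _, _, ι, hι⟩
    obtain ⟨n, -, s, -, hs, -⟩ := Module.Finite.exists_comp_eq_id_of_projective
      (TensorProduct k A (DualNumber k)) P
    exact ⟨n, s ∘ₗ ι, hs.comp hι⟩
  · rintro ⟨n, w, hw⟩
    exact ⟨Fin n → _, _, _, inferInstance, inferInstance, w, hw⟩
end

section
/- Let A be a finite dimensional hereditary k-algebra and Λ = A ⊗_k k[ε]. If V is a torsionless finitely generated left Λ-module, then V is strongly Gorenstein-projective: there exists a short exact sequence 0 → V → P → V → 0 with P projective, and Ext^1_Λ(V, P') = 0 for all projective left Λ-modules P'. -/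
/-- `V` is strongly Gorenstein-projective: there is a short exact sequence
`0 → V → P → V → 0` with `P` projective and `Ext¹_Λ(V, P') = 0` for every
projective module `P'`. -/
def IsStronglyGorensteinProjective (Λ : Type) [Ring Λ] (V : Type) [AddCommGroup V]
    [Module Λ V] : Prop :=
  (∃ (P : Type) (_ : AddCommGroup P) (_ : Module Λ P) (_ : Module.Projective Λ P)
    (ι : V →ₗ[Λ] P) (π : P →ₗ[Λ] V),
      Function.Injective ι ∧ Function.Surjective π ∧
      LinearMap.range ι = LinearMap.ker π) ∧
  ∀ (P' : Type) (_ : AddCommGroup P') (_ : Module Λ P'),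
    Module.Projective Λ P' → Ext1Vanishes Λ V P'


/-!
Write `Λ = A[ε]`. A torsionless `Λ`-module `V` lies in a projective `Λ`-module, which is
`A`-projective because `Λ` is `A`-free; as `A` is hereditary, `V` and `εV` are `A`-projective.
Splitting `ε : V → εV` over `A` gives an `A`-linear involution `σ` of `V` with `σ ε = -ε σ`, and
then `m ↦ 1 ⊗ εm + ε ⊗ m` and `1 ⊗ x + ε ⊗ y ↦ σ x + ε σ y` form a short exact sequence
`0 → V → Λ ⊗_A V → V → 0` whose middle term is projective.

For `Ext¹(V, W) = 0` with `W` projective: an `A`-linear section of `E → V` fails to be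
`Λ`-linear by an `A`-linear `t : V → W` with `t ε = -ε t`. Every projective `Λ`-module carries an
`A`-linear `q` with `ε q + q ε = 1`, and adding `q t` to the section makes it `Λ`-linear.
-/

section RestrictScalars

variable (A R : Type*) [Ring A] [Ring R] [Module A R] [IsScalarTower A R R]

abbrev restrictModule (X : Type*) [AddCommGroup X] [Module R X] : Module A X :=
  Module.compHom X (RingHom.smulOneHom : A →+* R)

theorem isScalarTower_restrictModule (X : Type*) [AddCommGroup X] [Module R X] :
    letI := restrictModule A R X
    IsScalarTower A R X :=
  letI := restrictModule A R X
  ⟨fun a r x => by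
    change (a • r) • x = (a • (1 : R)) • r • x
    rw [← mul_smul, smul_one_mul]⟩

variable {A R}

theorem Module.Projective.of_isScalarTower [Module.Projective A R] (M : Type*) [AddCommGroup M]
    [Module R M] [Module A M] [IsScalarTower A R M] [Module.Projective R M] :
    Module.Projective A M := by
  classical
  obtain ⟨s, hs⟩ := Module.projective_def.mp ‹Module.Projective R M›
  have : Module.Projective A (M →₀ R) := .of_equiv' (finsuppLequivDFinsupp A).symm
  exact .of_split (s.restrictScalars A) ((Finsupp.linearCombination R id).restrictScalars A)
    (LinearMap.ext hs)

theorem Module.Projective.of_injective_of_hereditary [Module.Projective A R]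
    (hHer : ∀ (P : Type) (_ : AddCommGroup P) (_ : Module A P),
      Module.Projective A P → ∀ N : Submodule A P, Module.Projective A N)
    {V Q : Type} [AddCommGroup V] [Module R V] [Module A V] [IsScalarTower A R V]
    [AddCommGroup Q] [Module R Q] [Module.Projective R Q] (ι : V →ₗ[R] Q)
    (hι : Function.Injective ι) : Module.Projective A V := by
  let := restrictModule A R Q
  have := isScalarTower_restrictModule A R Q
  have := hHer Q _ _ (.of_isScalarTower (A := A) (R := R) Q)
    (LinearMap.range (ι.restrictScalars A))
  exact .of_equiv' (LinearEquiv.ofInjective (ι.restrictScalars A) hι).symm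

end RestrictScalars

theorem Module.End.exists_involution_mul_eq_neg {A M : Type*} [Ring A] [AddCommGroup M]
    [Module A M] (ε : Module.End A M) (hε : ε * ε = 0)
    [Module.Projective A (LinearMap.range ε)] :
    ∃ σ : Module.End A M, σ * σ = 1 ∧ σ * ε = -(ε * σ) := by
  obtain ⟨ρ, hρ⟩ := ε.rangeRestrict.exists_rightInverse_of_surjective ε.range_rangeRestrict
  have hρ' (y) : ε.rangeRestrict (ρ y) = y := LinearMap.congr_fun hρ y
  -- `τ` is an idempotent with `ε τ = ε` and `τ ε = 0`, so `σ = 1 - 2τ` works.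
  set τ : Module.End A M := ρ ∘ₗ ε.rangeRestrict
  have hετ : ε * τ = ε := LinearMap.ext fun x => congr_arg Subtype.val (hρ' (ε.rangeRestrict x))
  have hτε : τ * ε = 0 := LinearMap.ext fun x => by
    have : ε.rangeRestrict (ε x) = 0 := Subtype.ext (LinearMap.congr_fun hε x)
    simp [τ, this]
  have hττ : τ * τ = τ := LinearMap.ext fun x => by simp [τ, hρ']
  refine ⟨1 - (τ + τ), ?_, ?_⟩
  · simp only [mul_sub, sub_mul, mul_add, add_mul, one_mul, mul_one, hττ]
    abel
  · simp only [mul_sub, sub_mul, mul_add, add_mul, one_mul, mul_one, hετ, hτε]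
    abel

structure DualNumberBasis (A R : Type*) [Ring A] [Ring R] [Module A R] where
  basis : Module.Basis (Fin 2) A R
  eps : R
  basis_zero : basis 0 = 1
  basis_one : basis 1 = eps
  commute_eps (r : R) : Commute eps r
  eps_mul_eps : eps * eps = 0

namespace DualNumberBasis

noncomputable section

variable {A R : Type*} [Ring A] [Ring R] [Module A R] (P : DualNumberBasis A R)

section Coordinates

def fst : R →ₗ[A] A := P.basis.coord 0

def snd : R →ₗ[A] A := P.basis.coord 1

theorem fst_smul_one_add_snd_smul_eps (r : R) : P.fst r • 1 + P.snd r • P.eps = r := by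
  have := P.basis.sum_repr r
  rwa [Fin.sum_univ_two, P.basis_zero, P.basis_one] at this

theorem fst_smul_one_add_smul_eps (a b : A) : P.fst (a • 1 + b • P.eps) = a := by
  simp [fst, ← P.basis_zero, ← P.basis_one]

theorem snd_smul_one_add_smul_eps (a b : A) : P.snd (a • 1 + b • P.eps) = b := by
  simp [snd, ← P.basis_zero, ← P.basis_one]

theorem fst_one : P.fst 1 = 1 := by simpa using P.fst_smul_one_add_smul_eps 1 0

theorem snd_one : P.snd 1 = 0 := by simpa using P.snd_smul_one_add_smul_eps 1 0

theorem fst_eps : P.fst P.eps = 0 := by simpa using P.fst_smul_one_add_smul_eps 0 1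

theorem snd_eps : P.snd P.eps = 1 := by simpa using P.snd_smul_one_add_smul_eps 0 1

theorem eps_smul_smul {X : Type*} [AddCommGroup X] [Module R X] [Module A X]
    [IsScalarTower A R X] (a : A) (x : X) : P.eps • a • x = a • P.eps • x := by
  rw [← smul_one_smul R a x, ← mul_smul, (P.commute_eps _).eq, mul_smul, smul_one_smul]

variable [IsScalarTower A R R]

theorem mul_eq (r s : R) :
    r * s = (P.fst r * P.fst s) • 1 + (P.fst r * P.snd s + P.snd r * P.fst s) • P.eps := by
  conv_lhs => rw [← P.fst_smul_one_add_snd_smul_eps r, ← P.fst_smul_one_add_snd_smul_eps s]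
  have (a : A) (x : R) : P.eps * (a • x) = a • (P.eps * x) := P.eps_smul_smul a x
  simp only [add_mul, smul_mul_assoc, one_mul, mul_add, this, mul_one, P.eps_mul_eps, smul_zero,
    add_zero, smul_smul, add_smul]
  abel

theorem fst_mul (r s : R) : P.fst (r * s) = P.fst r * P.fst s := by
  rw [P.mul_eq, fst_smul_one_add_smul_eps]

theorem snd_mul (r s : R) : P.snd (r * s) = P.fst r * P.snd s + P.snd r * P.fst s := by
  rw [P.mul_eq, snd_smul_one_add_smul_eps]

theorem snd_eps_mul (r : R) : P.snd (P.eps * r) = P.fst r := by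
  simp [snd_mul, fst_eps, snd_eps]

end Coordinates

section Modules

variable {X Y : Type*} [AddCommGroup X] [Module R X] [Module A X] [IsScalarTower A R X]
  [AddCommGroup Y] [Module R Y] [Module A Y] [IsScalarTower A R Y]

theorem smul_eq (r : R) (x : X) : r • x = P.fst r • x + P.snd r • P.eps • x := by
  conv_lhs => rw [← P.fst_smul_one_add_snd_smul_eps r]
  rw [add_smul, smul_assoc, one_smul, smul_assoc]

variable (X) in
def epsEnd : Module.End A X where
  toFun x := P.eps • x
  map_add' := smul_add P.eps
  map_smul' := P.eps_smul_smul

@[simp] theorem epsEnd_apply (x : X) : P.epsEnd X x = P.eps • x := rfl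

variable (X) in
theorem epsEnd_mul_self : P.epsEnd X * P.epsEnd X = 0 :=
  LinearMap.ext fun x => by simp [← mul_smul, P.eps_mul_eps]

def linearMapOfCommute (f : X →ₗ[A] Y) (hf : ∀ x, f (P.eps • x) = P.eps • f x) :
    X →ₗ[R] Y where
  toFun := f
  map_add' := f.map_add
  map_smul' r x := by
    rw [RingHom.id_apply, P.smul_eq r x, P.smul_eq r (f x), map_add, map_smul, map_smul, hf]

end Modules

/-- The induced module `R ⊗_A M`, the pair `⟨x, y⟩` standing for `1 ⊗ x + ε ⊗ y`. -/
@[ext] structure Induced (_ : DualNumberBasis A R) (M : Type*) where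
  fst : M
  snd : M

namespace Induced

variable (M : Type*) [AddCommGroup M]

def equivProd : P.Induced M ≃ M × M where
  toFun z := (z.fst, z.snd)
  invFun p := ⟨p.1, p.2⟩

instance : AddCommGroup (P.Induced M) := (equivProd P M).addCommGroup

variable {P M}

@[simp] theorem fst_add (z w : P.Induced M) : (z + w).fst = z.fst + w.fst := rfl
@[simp] theorem snd_add (z w : P.Induced M) : (z + w).snd = z.snd + w.snd := rfl

variable [Module A M]

instance : Module A (P.Induced M) := (equivProd P M).module A

@[simp] theorem fst_smul_base (a : A) (z : P.Induced M) : (a • z).fst = a • z.fst := rfl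
@[simp] theorem snd_smul_base (a : A) (z : P.Induced M) : (a • z).snd = a • z.snd := rfl

instance : SMul R (P.Induced M) :=
  ⟨fun r z => ⟨P.fst r • z.fst, P.fst r • z.snd + P.snd r • z.fst⟩⟩

@[simp] theorem fst_smul (r : R) (z : P.Induced M) : (r • z).fst = P.fst r • z.fst := rfl
@[simp] theorem snd_smul (r : R) (z : P.Induced M) :
    (r • z).snd = P.fst r • z.snd + P.snd r • z.fst := rfl

theorem eps_smul (z : P.Induced M) : P.eps • z = ⟨0, z.fst⟩ := by
  ext <;> simp [P.fst_eps, P.snd_eps]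

variable [IsScalarTower A R R]

instance : Module R (P.Induced M) := Module.ofMinimalAxioms
  (fun r z w => by ext <;> simp only [fst_smul, snd_smul, fst_add, snd_add, smul_add]; abel)
  (fun r s z => by
    ext <;> simp only [fst_smul, snd_smul, fst_add, snd_add, map_add, add_smul]; abel)
  (fun r s z => by
    ext <;> simp only [fst_smul, snd_smul, P.fst_mul, P.snd_mul, add_smul, mul_smul, smul_add]
    abel)
  (fun z => by ext <;> simp [P.fst_one, P.snd_one])

instance : IsScalarTower A R (P.Induced M) :=
  ⟨fun a r z => by ext <;> simp [mul_smul, smul_add]⟩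

end Induced

section Lift

variable {M N : Type*} [AddCommGroup M] [Module A M]

variable (M) in
def inl : M →ₗ[A] P.Induced M where
  toFun x := ⟨x, 0⟩
  map_add' x y := by ext <;> simp
  map_smul' a x := by ext <;> simp

@[simp] theorem fst_inl (x : M) : (P.inl M x).fst = x := rfl

@[simp] theorem snd_inl (x : M) : (P.inl M x).snd = 0 := rfl

theorem inl_add_eps_smul_inl (z : P.Induced M) : P.inl M z.fst + P.eps • P.inl M z.snd = z := by
  ext <;> simp [Induced.eps_smul]

variable [IsScalarTower A R R] [AddCommGroup N] [Module R N] [Module A N] [IsScalarTower A R N]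

def lift (f : M →ₗ[A] N) : P.Induced M →ₗ[R] N :=
  P.linearMapOfCommute
    { toFun z := f z.fst + P.eps • f z.snd
      map_add' z w := by simp only [Induced.fst_add, Induced.snd_add, map_add, smul_add]; abel
      map_smul' a z := by simp [P.eps_smul_smul] }
    (fun z => by simp [Induced.eps_smul, ← mul_smul, P.eps_mul_eps])

@[simp] theorem lift_apply (f : M →ₗ[A] N) (z : P.Induced M) :
    P.lift f z = f z.fst + P.eps • f z.snd := rfl

instance Induced.projective [Module.Projective A M] : Module.Projective R (P.Induced M) := by
  refine .of_lifting_property'' fun g hg => ?_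
  obtain ⟨f, hf⟩ := Module.projective_lifting_property (g.restrictScalars A) (P.inl M) hg
  refine ⟨P.lift f, LinearMap.ext fun z => ?_⟩
  have hf' (x : M) : g (f x) = P.inl M x := LinearMap.congr_fun hf x
  simp only [LinearMap.comp_apply, lift_apply, LinearMap.id_apply, map_add, map_smul, hf',
    P.inl_add_eps_smul_inl]

end Lift

section Sequence

variable [IsScalarTower A R R] (V : Type*) [AddCommGroup V] [Module R V] [Module A V]
  [IsScalarTower A R V]

def epsIncl : V →ₗ[R] P.Induced V :=
  P.linearMapOfCommute
    { toFun m := ⟨P.eps • m, m⟩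
      map_add' x y := by ext <;> simp
      map_smul' a m := by ext <;> simp [P.eps_smul_smul] }
    (fun m => by ext <;> simp [Induced.eps_smul, ← mul_smul, P.eps_mul_eps])

@[simp] theorem fst_epsIncl (m : V) : (P.epsIncl V m).fst = P.eps • m := rfl

@[simp] theorem snd_epsIncl (m : V) : (P.epsIncl V m).snd = m := rfl

variable {V} in
theorem range_epsIncl_eq_ker_lift {σ : Module.End A V} (hσ : σ * σ = 1)
    (hσε : σ * P.epsEnd V = -(P.epsEnd V * σ)) :
    LinearMap.range (P.epsIncl V) = LinearMap.ker (P.lift σ) := by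
  have hσσ (x : V) : σ (σ x) = x := LinearMap.congr_fun hσ x
  have hσε' (x : V) : σ (P.eps • x) = -(P.eps • σ x) := LinearMap.congr_fun hσε x
  ext z
  constructor
  · rintro ⟨m, rfl⟩
    simp [hσε']
  · intro hz
    have h : σ z.fst = -(P.eps • σ z.snd) := eq_neg_of_add_eq_zero_left hz
    refine ⟨z.snd, Induced.ext ?_ rfl⟩
    rw [fst_epsIncl, ← hσσ z.fst, h, map_neg, hσε', hσσ, neg_neg]

theorem exists_eps_homotopy [Module.Projective R V] :
    ∃ q : V →ₗ[A] V, ∀ v, P.eps • q v + q (P.eps • v) = v := by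
  obtain ⟨s, hs⟩ := Module.projective_def.mp ‹Module.Projective R V›
  -- On `R` itself `r ↦ snd r • 1` is such a map; it extends coordinatewise to `V →₀ R`.
  let qF : (V →₀ R) →ₗ[A] (V →₀ R) :=
    Finsupp.mapRange.linearMap (LinearMap.smulRight P.snd (1 : R))
  have hqF (c : V →₀ R) : P.eps • qF c + qF (P.eps • c) = c := by
    ext v
    have h : P.eps * (P.snd (c v) • 1) = P.snd (c v) • P.eps := by
      rw [← smul_eq_mul, P.eps_smul_smul, smul_eq_mul, mul_one]
    simp [qF, h, P.snd_eps_mul, add_comm, P.fst_smul_one_add_snd_smul_eps]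
  refine ⟨(Finsupp.linearCombination R id).restrictScalars A ∘ₗ qF ∘ₗ s.restrictScalars A,
    fun v => ?_⟩
  simp only [LinearMap.comp_apply, LinearMap.restrictScalars_apply, map_smul]
  rw [← map_smul, ← map_add, hqF, hs]

end Sequence

end

section Gorenstein

variable {A : Type*} {R : Type} [Ring A] [Ring R] [Module A R] [IsScalarTower A R R]

theorem ext1Vanishes (P : DualNumberBasis A R) (V W : Type) [AddCommGroup V] [Module R V]
    [Module A V] [IsScalarTower A R V] [Module.Projective A V] [AddCommGroup W] [Module R W]
    [Module.Projective R W] : Ext1Vanishes R V W := by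
  intro E _ _ f g hf hg hfg
  let := restrictModule A R E
  have := isScalarTower_restrictModule A R E
  let := restrictModule A R W
  have := isScalarTower_restrictModule A R W
  obtain ⟨s₀, hs₀⟩ := Module.projective_lifting_property (g.restrictScalars A) LinearMap.id hg
  have hgs₀ (m : V) : g (s₀ m) = m := LinearMap.congr_fun hs₀ m
  let d : V →ₗ[A] E := s₀ ∘ₗ P.epsEnd V - P.epsEnd E ∘ₗ s₀
  have hd : LinearMap.range d ≤ LinearMap.range (f.restrictScalars A) := by
    rintro _ ⟨m, rfl⟩
    rw [LinearMap.range_restrictScalars, Submodule.restrictScalars_mem, hfg, LinearMap.mem_ker]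
    simp [d, hgs₀]
  let t : V →ₗ[A] W := (LinearEquiv.ofInjective (f.restrictScalars A) hf).symm.toLinearMap ∘ₗ
    d.codRestrict _ (fun m => hd ⟨m, rfl⟩)
  have hft (m : V) : f (t m) = s₀ (P.eps • m) - P.eps • s₀ m :=
    LinearEquiv.ofInjective_symm_apply (f := f.restrictScalars A) (h := hf) (d.codRestrict _ _ m)
  have ht (m : V) : t (P.eps • m) = -(P.eps • t m) :=
    hf (by simp [hft, smul_sub, ← mul_smul, P.eps_mul_eps])
  obtain ⟨q, hq⟩ := P.exists_eps_homotopy W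
  let s : V →ₗ[A] E := s₀ + f.restrictScalars A ∘ₗ q ∘ₗ t
  refine ⟨P.linearMapOfCommute s fun m => ?_, LinearMap.ext fun m => ?_⟩
  · calc s₀ (P.eps • m) + f (q (t (P.eps • m)))
        = s₀ (P.eps • m) - f (q (P.eps • t m)) := by rw [ht, map_neg, map_neg, sub_eq_add_neg]
      _ = P.eps • s₀ m + f (t m) - f (q (P.eps • t m)) := by rw [hft]; abel
      _ = P.eps • s₀ m + f (P.eps • q (t m)) := by
        rw [← congr_arg f (hq (t m)), map_add]
        abel
      _ = P.eps • (s₀ m + f (q (t m))) := by rw [map_smul, smul_add]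
  · have hgf (w : W) : g (f w) = 0 := LinearMap.mem_ker.mp (hfg ▸ LinearMap.mem_range_self f w)
    change g (s₀ m + f (q (t m))) = m
    rw [map_add, hgs₀, hgf, add_zero]

theorem isStronglyGorensteinProjective (P : DualNumberBasis A R) (V : Type) [AddCommGroup V]
    [Module R V] [Module A V] [IsScalarTower A R V] [Module.Projective A V]
    [Module.Projective A (LinearMap.range (P.epsEnd V))] :
    IsStronglyGorensteinProjective R V := by
  obtain ⟨σ, hσ, hσε⟩ := (P.epsEnd V).exists_involution_mul_eq_neg (P.epsEnd_mul_self V)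
  refine ⟨⟨P.Induced V, inferInstance, inferInstance, inferInstance, P.epsIncl V, P.lift σ,
    fun x y h => congr_arg Induced.snd h, fun m => ⟨⟨σ m, 0⟩, ?_⟩,
    P.range_epsIncl_eq_ker_lift hσ hσε⟩, fun W _ _ _ => P.ext1Vanishes V W⟩
  simp [← Module.End.mul_apply, hσ]

end Gorenstein

end DualNumberBasis

@[simps]
def DualNumber.linearEquivProd (k : Type*) [CommRing k] : DualNumber k ≃ₗ[k] k × k where
  toFun x := (x.fst, x.snd)
  invFun p := TrivSqZeroExt.inl p.1 + TrivSqZeroExt.inr p.2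
  map_add' _ _ := rfl
  map_smul' _ _ := rfl
  left_inv := TrivSqZeroExt.inl_fst_add_inr_snd_eq
  right_inv p := by simp

open scoped TensorProduct in
noncomputable def DualNumberBasis.tensorProduct (k A : Type*) [CommRing k] [Ring A]
    [Algebra k A] : DualNumberBasis A (A ⊗[k] DualNumber k) where
  basis := Algebra.TensorProduct.basis A
    ((Module.Basis.finTwoProd k).map (DualNumber.linearEquivProd k).symm)
  eps := 1 ⊗ₜ DualNumber.eps
  basis_zero := by simp [Algebra.TensorProduct.one_def]
  basis_one := by simp [DualNumber.inr_eq_smul_eps]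
  commute_eps r := by
    induction r using TensorProduct.induction_on with
    | zero => exact Commute.zero_right (1 ⊗ₜ[k] DualNumber.eps : A ⊗[k] DualNumber k)
    | tmul a w =>
      simp only [Commute, SemiconjBy, Algebra.TensorProduct.tmul_mul_tmul, one_mul, mul_one,
        (DualNumber.commute_eps_left w).eq]
    | add x y hx hy => exact hx.add_right hy
  eps_mul_eps := by
    rw [Algebra.TensorProduct.tmul_mul_tmul, one_mul, DualNumber.eps_mul_eps,
      TensorProduct.tmul_zero]

theorem stmt_12_general (k : Type) [Field k] (A : Type) [Ring A] [Algebra k A]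
    (hHer : ∀ (P : Type) (_ : AddCommGroup P) (_ : Module A P),
      Module.Projective A P → ∀ N : Submodule A P, Module.Projective A N)
    (V : Type) [AddCommGroup V] [Module (TensorProduct k A (DualNumber k)) V]
    (htl : ∃ (P : Type) (_ : AddCommGroup P) (_ : Module (TensorProduct k A (DualNumber k)) P),
        Module.Projective (TensorProduct k A (DualNumber k)) P ∧
        ∃ ι : @LinearMap (TensorProduct k A (DualNumber k)) (TensorProduct k A (DualNumber k)) _ _
          (RingHom.id (TensorProduct k A (DualNumber k))) V P _ _ _ _, Function.Injective ι) :
    IsStronglyGorensteinProjective (TensorProduct k A (DualNumber k)) V := by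
  let P := DualNumberBasis.tensorProduct k A
  let := restrictModule A (TensorProduct k A (DualNumber k)) V
  have := isScalarTower_restrictModule A (TensorProduct k A (DualNumber k)) V
  have : Module.Projective A (TensorProduct k A (DualNumber k)) := .of_basis P.basis
  obtain ⟨Q, _, _, _, ι, hι⟩ := htl
  have hV : Module.Projective A V :=
    .of_injective_of_hereditary (R := TensorProduct k A (DualNumber k)) hHer ι hι
  have := hHer V _ _ hV (LinearMap.range (P.epsEnd V))
  exact P.isStronglyGorensteinProjective V

/-- Let `A` be a finite dimensional hereditary `k`-algebra (such as the path
algebra of a finite connected acyclic quiver) and `Λ = A ⊗_k k[ε]`.  If `V` is a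
torsionless finitely generated left `Λ`-module (i.e. `V` embeds into a projective
`Λ`-module), then `V` is strongly Gorenstein-projective. -/
theorem stmt_12 (k : Type) [Field k] (A : Type) [Ring A] [Algebra k A]
    [FiniteDimensional k A]
    (hHer : ∀ (P : Type) (_ : AddCommGroup P) (_ : Module A P),
      Module.Projective A P → ∀ N : Submodule A P, Module.Projective A N)
    (V : Type) [AddCommGroup V] [Module (TensorProduct k A (DualNumber k)) V]
    [Module.Finite (TensorProduct k A (DualNumber k)) V]
    (htl : ∃ (P : Type) (_ : AddCommGroup P) (_ : Module (TensorProduct k A (DualNumber k)) P),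
        Module.Projective (TensorProduct k A (DualNumber k)) P ∧
        ∃ ι : @LinearMap (TensorProduct k A (DualNumber k)) (TensorProduct k A (DualNumber k)) _ _
          (RingHom.id (TensorProduct k A (DualNumber k))) V P _ _ _ _, Function.Injective ι) :
    IsStronglyGorensteinProjective (TensorProduct k A (DualNumber k)) V :=
  stmt_12_general k A hHer V htl
end

section
/- Let A be a hereditary ring and Λ = A[ε] = A ⊗_ℤ ℤ[t]/(t^2) (so Λ = A[t]/(t^2)). Then every Λ-submodule of a projective Λ-module P satisfies Ext^1_Λ(V, Λ) = 0, i.e., torsionless implies Ext^1_Λ(V,Λ) = 0. -/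
universe u

open CategoryTheory TrivSqZeroExt

section Exact

variable {R : Type*} [Ring R] {M N P W : Type*} [AddCommGroup M] [AddCommGroup N]
  [AddCommGroup P] [AddCommGroup W] [Module R M] [Module R N] [Module R P] [Module R W]

theorem Function.Exact.exists_desc_of_surjective {f : M →ₗ[R] N} {g : N →ₗ[R] P}
    (hfg : Function.Exact f g) (hg : Function.Surjective g)
    (k : N →ₗ[R] W) (hk : k ∘ₗ f = 0) : ∃ φ : P →ₗ[R] W, φ ∘ₗ g = k :=
  ⟨(LinearMap.range f).liftQ k (LinearMap.range_le_ker_iff.mpr hk) ∘ₗ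
      (hfg.linearEquivOfSurjective hg).symm.toLinearMap,
    by ext x; simp⟩

theorem Function.Exact.exists_lift_of_injective {u : M →ₗ[R] N} {p : N →ₗ[R] P}
    (hup : Function.Exact u p) (hu : Function.Injective u)
    (θ : W →ₗ[R] N) (hθ : p ∘ₗ θ = 0) : ∃ r : W →ₗ[R] M, u ∘ₗ r = θ := by
  have hθu : ∀ w, θ w ∈ LinearMap.range u := fun w ↦ (hup (θ w)).mp (LinearMap.congr_fun hθ w)
  exact ⟨(LinearEquiv.ofInjective u hu).symm.toLinearMap ∘ₗ θ.codRestrict _ hθu, by ext w; simp⟩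

end Exact

theorem exists_lift_of_embedding_into_projective {R : Type u} [Ring R] {V Q I₀ I₁ : Type u}
    [AddCommGroup V] [AddCommGroup Q] [AddCommGroup I₀] [AddCommGroup I₁] [Module R V]
    [Module R Q] [Module R I₀] [Module R I₁] [Module.Projective R Q] [Module.Injective R I₁]
    (ι : V →ₗ[R] Q) (hι : Function.Injective ι) (p : I₀ →ₗ[R] I₁) (hp : Function.Surjective p)
    (φ : V →ₗ[R] I₁) : ∃ ψ : V →ₗ[R] I₀, p ∘ₗ ψ = φ := by
  obtain ⟨Φ, hΦ⟩ := Module.Injective.extension_property R I₁ V Q ι hι φ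
  obtain ⟨Ψ, hΨ⟩ := Module.projective_lifting_property p Φ hp
  exact ⟨Ψ ∘ₗ ι, by ext v; simp [← LinearMap.comp_apply p Ψ, hΨ, ← LinearMap.comp_apply Φ ι, hΦ]⟩

theorem ext1Vanishes_of_injective_coresolution {R M V Q I₀ I₁ : Type} [Ring R]
    [AddCommGroup M] [AddCommGroup V] [AddCommGroup Q] [AddCommGroup I₀] [AddCommGroup I₁]
    [Module R M] [Module R V] [Module R Q] [Module R I₀] [Module R I₁]
    [Module.Projective R Q] [Module.Injective R I₀] [Module.Injective R I₁]
    {u : M →ₗ[R] I₀} {p : I₀ →ₗ[R] I₁} (hu : Function.Injective u) (hup : Function.Exact u p)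
    (hp : Function.Surjective p) (ι : V →ₗ[R] Q) (hι : Function.Injective ι) :
    Ext1Vanishes R V M := by
  -- Extend `u` along `f` to `h`; `p ∘ h` descends to `φ` on `V`, which lifts to `ψ : V → I₀`
  -- through `Q`. Then `p` kills `h - ψ ∘ g`, so it is `u ∘ r`, and `r` is a retraction of `f`.
  intro E _ _ f g hf hg hfg
  have hfg : Function.Exact f g := LinearMap.exact_iff.mpr hfg.symm
  obtain ⟨h, hh⟩ := Module.Injective.extension_property R I₀ M E f hf u
  have hhf : ∀ x, h (f x) = u x := LinearMap.congr_fun hh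
  obtain ⟨φ, hφ⟩ := hfg.exists_desc_of_surjective hg (p ∘ₗ h) (by
    ext x; simp [hhf, hup.apply_apply_eq_zero])
  obtain ⟨ψ, hψ⟩ := exists_lift_of_embedding_into_projective ι hι p hp φ
  obtain ⟨r, hr⟩ := hup.exists_lift_of_injective hu (h - ψ ∘ₗ g) (by
    rw [LinearMap.comp_sub, ← hφ, ← LinearMap.comp_assoc, hψ, sub_self])
  have hrf : r ∘ₗ f = LinearMap.id := by
    ext x
    apply hu
    simpa [hhf, hfg.apply_apply_eq_zero] using LinearMap.congr_fun hr (f x)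
  have hsplit := (hfg.split_tfae hf hg).out 0 1
  exact hsplit.mpr ⟨r, hrf⟩

theorem Module.Injective.quotient {A J : Type u} [Ring A] [AddCommGroup J] [Module A J]
    [Module.Injective A J] (hA : ∀ I : Ideal A, Module.Projective A I) (N : Submodule A J) :
    Module.Injective A (J ⧸ N) := by
  refine Module.Baer.injective fun I φ ↦ ?_
  obtain ⟨φ', hφ'⟩ := Module.projective_lifting_property N.mkQ φ N.mkQ_surjective
  obtain ⟨Ψ, hΨ⟩ := Module.Injective.extension_property A J I A I.subtype I.injective_subtype φ'
  refine ⟨N.mkQ ∘ₗ Ψ, fun x hx ↦ ?_⟩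
  rw [← hφ', LinearMap.comp_apply, LinearMap.comp_apply, ← hΨ]
  rfl

theorem exists_injective_module_embedding (A : Type u) [Ring A] :
    ∃ (J : Type u) (_ : AddCommGroup J) (_ : Module A J) (j : A →ₗ[A] J),
      Function.Injective j ∧ Module.Injective A J := by
  let X : ModuleCat.{u} A := ModuleCat.of A A
  refine ⟨↥(Injective.under X), inferInstance, inferInstance, (Injective.ι X).hom,
    (ModuleCat.mono_iff_injective _).mp inferInstance, ?_⟩
  exact Module.injective_module_of_injective_object A _ (inj := Injective.injective_under X)

section Coind

variable {R S : Type u} [Ring R] [Ring S] (f : R →+* S)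

abbrev RestrictedSelf : Type u :=
  (ModuleCat.restrictScalars f).obj (ModuleCat.of S S)

/-- `Hom_R(S, J)`, with `S` acting by `(s • g) x = g (x * s)`: the carrier of Mathlib's
coextension of scalars `(ModuleCat.coextendScalars f).obj (ModuleCat.of R J)`. -/
abbrev Coind (J : Type u) [AddCommGroup J] [Module R J] : Type u :=
  RestrictedSelf f →ₗ[R] J

variable {J K : Type u} [AddCommGroup J] [Module R J] [AddCommGroup K] [Module R K]

instance [Module.Injective R J] : Module.Injective S (Coind f J) :=
  have := Module.injective_object_of_injective_module R J
  have := Injective.injective_of_adjoint (ModuleCat.restrictCoextendScalarsAdj f)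
    (ModuleCat.of R J)
  Module.injective_module_of_injective_object S
    ((ModuleCat.coextendScalars f).obj (ModuleCat.of R J))

noncomputable def Coind.map (q : J →ₗ[R] K) : Coind f J →ₗ[S] Coind f K where
  toFun g := q ∘ₗ g
  map_add' g h := LinearMap.comp_add g h q
  map_smul' _ _ := rfl

variable {f}

theorem Coind.map_injective {q : J →ₗ[R] K} (hq : Function.Injective q) :
    Function.Injective (Coind.map f q) :=
  fun _ _ h ↦ LinearMap.ext fun x ↦ hq (LinearMap.congr_fun h x)

theorem Coind.map_surjective [Module.Projective R (RestrictedSelf f)] {q : J →ₗ[R] K}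
    (hq : Function.Surjective q) : Function.Surjective (Coind.map f q) :=
  fun g ↦ Module.projective_lifting_property q g hq

theorem Coind.exact_map {M : Type u} [AddCommGroup M] [Module R M] {q₁ : M →ₗ[R] J}
    {q₂ : J →ₗ[R] K} (hq₁ : Function.Injective q₁) (hq : Function.Exact q₁ q₂) :
    Function.Exact (Coind.map f q₁) (Coind.map f q₂) := by
  refine LinearMap.exact_of_comp_eq_zero_of_ker_le_range ?_ fun g hg ↦ ?_
  · ext g x
    exact hq.apply_apply_eq_zero (g x)
  · obtain ⟨r, hr⟩ :=
      hq.exists_lift_of_injective hq₁ g (LinearMap.ext fun x ↦ LinearMap.congr_fun hg x)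
    exact ⟨r, hr⟩

end Coind

namespace DualNumber

variable {A : Type u} [Ring A]

def restrictedSelfEquiv : RestrictedSelf (inlHom A A) ≃ₗ[A] A × A where
  toFun (x : DualNumber A) := (x.fst, x.snd)
  invFun y := (inl y.1 + inr y.2 : DualNumber A)
  map_add' _ _ := rfl
  map_smul' a (x : DualNumber A) :=
    show ((inl a * x).fst, (inl a * x).snd) = (a * x.fst, a * x.snd) by simp
  left_inv (x : DualNumber A) := inl_fst_add_inr_snd_eq x
  right_inv y := by simp

instance : Module.Projective A (RestrictedSelf (inlHom A A)) :=
  .of_equiv' restrictedSelfEquiv.symm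

theorem coind_apply {J : Type u} [AddCommGroup J] [Module A J] (g : Coind (inlHom A A) J)
    (x : DualNumber A) : g x = x.fst • g (1 : DualNumber A) + x.snd • g (eps : DualNumber A) := by
  have hx : x = inl x.fst * 1 + inl x.snd * eps := by ext <;> simp
  have hsmul : ∀ (a : A) (y : DualNumber A), g (inl a * y) = a • g y := map_smul g
  have hadd : ∀ (y z : DualNumber A), g (y + z) = g y + g z := map_add g
  exact (congrArg g hx).trans ((hadd _ _).trans (congrArg₂ (· + ·) (hsmul _ _) (hsmul _ _)))

-- The trace form `x ↦ snd x` makes `A[ε]` a Frobenius extension of `A`.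
noncomputable def toCoind : DualNumber A →ₗ[DualNumber A] Coind (inlHom A A) A where
  toFun l :=
    { toFun := fun (x : DualNumber A) ↦ (x * l).snd
      map_add' := fun (x y : DualNumber A) ↦ congrArg TrivSqZeroExt.snd (add_mul x y l)
      map_smul' := fun a (x : DualNumber A) ↦
        show ((inl a * x) * l).snd = a * (x * l).snd by rw [mul_assoc]; simp }
  map_add' l m := by
    ext (x : DualNumber A)
    exact congrArg TrivSqZeroExt.snd (mul_add x l m)
  map_smul' s l := by
    ext (x : DualNumber A)
    exact congrArg TrivSqZeroExt.snd (mul_assoc x s l).symm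

theorem toCoind_apply (l x : DualNumber A) : toCoind l x = (x * l).snd := rfl

theorem toCoind_bijective : Function.Bijective (toCoind (A := A)) := by
  refine ⟨fun l m h ↦ ?_, fun g ↦ ⟨inl (g (eps : DualNumber A)) + inr (g (1 : DualNumber A)), ?_⟩⟩
  · have h1 := LinearMap.congr_fun h (1 : DualNumber A)
    have hε := LinearMap.congr_fun h (eps : DualNumber A)
    simp only [toCoind_apply, one_mul, snd_mul] at h1 hε
    ext
    · simpa using hε
    · exact h1
  · ext (x : DualNumber A)
    rw [toCoind_apply, coind_apply g x, snd_mul]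
    simp

end DualNumber

theorem stmt_18_general (A : Type) [Ring A]
    (hHer : ∀ (P : Type) (_ : AddCommGroup P) (_ : Module A P),
      Module.Projective A P → ∀ N : Submodule A P, Module.Projective A N)
    (V : Type) [AddCommGroup V] [Module (DualNumber A) V]
    (P : Type) [AddCommGroup P] [Module (DualNumber A) P]
    [Module.Projective (DualNumber A) P]
    (ι : V →ₗ[DualNumber A] P) (hι : Function.Injective ι) :
    Ext1Vanishes (DualNumber A) V (DualNumber A) := by
  obtain ⟨J, _, _, j, hj, _⟩ := exists_injective_module_embedding A
  have : Module.Injective A (J ⧸ LinearMap.range j) :=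
    Module.Injective.quotient (fun I ↦ hHer A _ _ inferInstance I) _
  refine ext1Vanishes_of_injective_coresolution
    (u := Coind.map (inlHom A A) j ∘ₗ DualNumber.toCoind)
    (p := Coind.map (inlHom A A) (LinearMap.range j).mkQ) ?_ ?_ ?_ ι hι
  · exact (Coind.map_injective hj).comp DualNumber.toCoind_bijective.injective
  · exact DualNumber.toCoind_bijective.surjective.comp_exact_iff_exact.mpr
      (Coind.exact_map hj (LinearMap.exact_map_mkQ_range j))
  · exact Coind.map_surjective (LinearMap.range j).mkQ_surjective

/-- Let `A` be a hereditary ring (every submodule of a projective `A`-module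
is projective) and `Λ = A[ε] = A[t]/(t²)` the dual numbers over `A`.  Then every finitely
generated `Λ`-submodule `V` of a projective `Λ`-module satisfies `Ext¹_Λ(V, Λ) = 0`:
torsionless implies `Ext¹_Λ(V, Λ) = 0`. -/
theorem stmt_18 (A : Type) [Ring A]
    (hHer : ∀ (P : Type) (_ : AddCommGroup P) (_ : Module A P),
      Module.Projective A P → ∀ N : Submodule A P, Module.Projective A N)
    (V : Type) [AddCommGroup V] [Module (DualNumber A) V]
    [Module.Finite (DualNumber A) V]
    (P : Type) [AddCommGroup P] [Module (DualNumber A) P]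
    [Module.Projective (DualNumber A) P]
    (ι : V →ₗ[DualNumber A] P) (hι : Function.Injective ι) :
    Ext1Vanishes (DualNumber A) V (DualNumber A) :=
  stmt_18_general A hHer V P ι hι
end
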